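/- arXiv:0903.0913 — 2 statements merged into one kernel-verified Lean document; each statement's English description precedes it below -/
import Mathlib

section
/- Let φ : (0, H] → [0, ∞) be nondecreasing and left-continuous, and let S : (0, H] → (0, ∞) be continuous and strictly decreasing with S(h) → ∞ as h → 0+. Suppose φ(h_1) ≤ S(h_1) for some h_1 ∈ (0, H]. Define h* = sup{h ∈ (0, H] : φ(h) ≤ S(h)}. Then for every h with 0 < h ≤ h*, φ(h) ≤ S(h). -/
/-- Ideal-window property: if `φ` is nondecreasing and left-continuous on
`(0,H]`, `S` is continuous, strictly decreasing with `S(h) → ∞` as `h → 0+`,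
`S > 0`, and `φ(h₁) ≤ S(h₁)` for some `h₁ ∈ (0,H]`, then with
`h* = sup{h ∈ (0,H] : φ(h) ≤ S(h)}` one has `φ(h) ≤ S(h)` for all
`0 < h ≤ h*`. -/
theorem stmt_14 (H : ℝ) (hH : 0 < H) (φ S : ℝ → ℝ)
    (hφ0 : ∀ h ∈ Set.Ioc (0:ℝ) H, 0 ≤ φ h)
    (hφmono : MonotoneOn φ (Set.Ioc 0 H))
    (hφlc : ∀ h ∈ Set.Ioc (0:ℝ) H, ContinuousWithinAt φ (Set.Iio h) h)
    (hSpos : ∀ h ∈ Set.Ioc (0:ℝ) H, 0 < S h)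
    (hScont : ContinuousOn S (Set.Ioc 0 H))
    (hSanti : StrictAntiOn S (Set.Ioc 0 H))
    (hSblow : Filter.Tendsto S (nhdsWithin 0 (Set.Ioi 0)) Filter.atTop)
    (h₁ : ℝ) (hh₁ : h₁ ∈ Set.Ioc (0:ℝ) H) (hfeas : φ h₁ ≤ S h₁) :
    ∀ h : ℝ, 0 < h → h ≤ sSup {h' | h' ∈ Set.Ioc (0:ℝ) H ∧ φ h' ≤ S h'} →
      φ h ≤ S h := by
  set A : Set ℝ := {h' | h' ∈ Set.Ioc (0:ℝ) H ∧ φ h' ≤ S h'} with hA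
  have hA_ne : h₁ ∈ A := ⟨hh₁, hfeas⟩
  have hbdd : BddAbove A := ⟨H, fun x hx => hx.1.2⟩
  have hstar_pos : (0:ℝ) < sSup A := lt_of_lt_of_le hh₁.1 (le_csSup hbdd hA_ne)
  have hstar_le_H : sSup A ≤ H := csSup_le ⟨h₁, hA_ne⟩ (fun x hx => hx.1.2)
  have hstar_mem : sSup A ∈ Set.Ioc (0:ℝ) H := ⟨hstar_pos, hstar_le_H⟩
  -- the strict case
  have key : ∀ h : ℝ, 0 < h → h < sSup A → φ h ≤ S h := by
    intro h hp hlt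
    obtain ⟨h', hh'A, hhh'⟩ := exists_lt_of_lt_csSup ⟨h₁, hA_ne⟩ hlt
    have hmem : h ∈ Set.Ioc (0:ℝ) H := ⟨hp, le_trans hhh'.le hh'A.1.2⟩
    calc φ h ≤ φ h' := hφmono hmem hh'A.1 hhh'.le
      _ ≤ S h' := hh'A.2
      _ ≤ S h := (hSanti hmem hh'A.1 hhh').le
  intro h hp hle
  rcases lt_or_eq_of_le hle with hlt | heq
  · exact key h hp hlt
  · subst heq
    have hne : (Set.Ioo (0:ℝ) (sSup A)).Nonempty := ⟨sSup A / 2, by positivity, by linarith⟩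
    have hnb : (nhdsWithin (sSup A) (Set.Ioo 0 (sSup A))).NeBot :=
      (isLUB_Ioo hstar_pos).nhdsWithin_neBot hne
    have htφ : Filter.Tendsto φ (nhdsWithin (sSup A) (Set.Ioo 0 (sSup A))) (nhds (φ (sSup A))) :=
      (hφlc _ hstar_mem).mono_left (nhdsWithin_mono _ Set.Ioo_subset_Iio_self)
    have htS : Filter.Tendsto S (nhdsWithin (sSup A) (Set.Ioo 0 (sSup A))) (nhds (S (sSup A))) :=
      (hScont _ hstar_mem).mono_left (nhdsWithin_mono _
        (fun x hx => ⟨hx.1, le_trans hx.2.le hstar_le_H⟩))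
    refine le_of_tendsto_of_tendsto htφ htS ?_
    filter_upwards [self_mem_nhdsWithin] with x hx
    exact key x hx.1 hx.2
end

section
/- Let d ≥ 1, q ≥ 2, m ≥ 1, and let h : V → [m^{-1}, ∞) on a finite set V ⊂ m^{-1}Z^d. Suppose V = V_1 ∪ … ∪ V_M is a partition and x_1, …, x_M ∈ V satisfy: for all ℓ and x ∈ V_ℓ, h(x) ≥ max(h(x_ℓ), ‖x − x_ℓ‖_∞), and dq/2 − d ≥ 1. Then m^{-d} Σ_{x∈V} h(x)^{−dq/2} ≤ C(d, q) Σ_{ℓ=1}^M h(x_ℓ)^{d − dq/2}, with C(d, q) depending only on d and q. -/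
/-!
Since the sup norm dominates every coordinate, `max(a, ‖x - c‖∞)^(-d r)` is at most
`∏ᵢ max(a, |xᵢ - cᵢ|)^(-r)`, so the lattice sum over a group is at most a product of `d`
one-dimensional lattice sums. Each of these is `O(m a^(1-r))`: the `O(m a)` points with
`|n|/m ≤ a` contribute `a^(-r)` each, and the tail is compared with `∫ₐ^∞ t^(-r) dt`, which
converges because `r = q/2 > 1`. The factors `m` cancel against `m^(-d)`.
-/

open Finset

theorem sum_natCast_rpow_neg_le {r : ℝ} (hr : 1 < r) {N : ℕ} (hN : 0 < N) {S : Finset ℕ}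
    (hS : ∀ k ∈ S, N < k) :
    ∑ k ∈ S, (k : ℝ) ^ (-r) ≤ (N : ℝ) ^ (1 - r) / (r - 1) := by
  have hN' : (0 : ℝ) < N := by exact_mod_cast hN
  set K := S.sup id
  calc ∑ k ∈ S, (k : ℝ) ^ (-r)
      ≤ ∑ k ∈ Ico (N + 1) (K + 1), (k : ℝ) ^ (-r) := by
        refine sum_le_sum_of_subset_of_nonneg (fun k hk => ?_) fun k _ _ => by positivity
        exact mem_Ico.2 ⟨hS k hk, Nat.lt_succ_of_le (le_sup (f := id) hk)⟩
    _ = ∑ n ∈ Ico N K, ((n + 1 : ℕ) : ℝ) ^ (-r) := by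
        rw [← image_add_right_Ico, sum_image (add_left_injective 1).injOn]
    _ ≤ ∫ x in Set.Ioi (N : ℝ), x ^ (-r) :=
        AntitoneOn.sum_Ico_le_integral
          (fun x hx y _ hxy => Real.rpow_le_rpow_of_nonpos (hN'.trans_le hx.1) hxy (by linarith))
          (integrableOn_Ioi_rpow_of_lt (by linarith) hN')
          fun t ht => Real.rpow_nonneg (hN'.trans ht).le _
    _ = (N : ℝ) ^ (1 - r) / (r - 1) := by
        rw [integral_Ioi_rpow_of_lt (by linarith) hN', neg_div, ← div_neg]
        ring_nf

theorem sum_max_div_rpow_neg_le {r a m : ℝ} (hr : 1 < r) (hm : 0 < m) (ham : 1 ≤ a * m)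
    (S : Finset ℕ) :
    ∑ k ∈ S, max a (k / m) ^ (-r) ≤ (3 + 1 / (r - 1)) * m * a ^ (1 - r) := by
  have ha : 0 < a := pos_of_mul_pos_left (one_pos.trans_le ham) hm.le
  set N := ⌈a * m⌉₊
  have hN : a * m ≤ N := Nat.le_ceil _
  have hN' : (N : ℝ) < a * m + 1 := Nat.ceil_lt_add_one (by linarith)
  have hr' : 0 < r - 1 := by linarith
  have a_rpow : a ^ (1 - r) = a * a ^ (-r) := by
    rw [sub_eq_add_neg, Real.rpow_add ha, Real.rpow_one]
  have near : ∑ k ∈ S with k ≤ N, max a (k / m) ^ (-r) ≤ 3 * m * a ^ (1 - r) := by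
    calc ∑ k ∈ S with k ≤ N, max a (k / m) ^ (-r)
        ≤ ∑ k ∈ S with k ≤ N, a ^ (-r) :=
          sum_le_sum fun k _ => Real.rpow_le_rpow_of_nonpos ha (le_max_left _ _) (by linarith)
      _ ≤ ∑ k ∈ range (N + 1), a ^ (-r) :=
          sum_le_sum_of_subset_of_nonneg
            (fun k hk => mem_range.2 (Nat.lt_succ_of_le (mem_filter.1 hk).2))
            fun _ _ _ => by positivity
      _ ≤ 3 * m * a ^ (1 - r) := by
          rw [sum_const, card_range, nsmul_eq_mul, a_rpow]
          push_cast
          have := Real.rpow_nonneg ha.le (-r)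
          nlinarith
  have far : ∑ k ∈ S with ¬k ≤ N, max a (k / m) ^ (-r) ≤ 1 / (r - 1) * m * a ^ (1 - r) := by
    calc ∑ k ∈ S with ¬k ≤ N, max a (k / m) ^ (-r)
        = m ^ r * ∑ k ∈ S with ¬k ≤ N, (k : ℝ) ^ (-r) := by
          rw [mul_sum]
          refine sum_congr rfl fun k hk => ?_
          have hk : (N : ℝ) < k := by exact_mod_cast not_le.1 (mem_filter.1 hk).2
          rw [max_eq_right ((le_div_iff₀ hm).2 (by linarith)), Real.div_rpow (by linarith) hm.le,
            Real.rpow_neg hm.le]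
          field_simp
      _ ≤ m ^ r * ((N : ℝ) ^ (1 - r) / (r - 1)) := by
          gcongr
          exact sum_natCast_rpow_neg_le hr (Nat.ceil_pos.2 (by linarith : (0 : ℝ) < a * m))
            fun k hk => not_le.1 (mem_filter.1 hk).2
      _ ≤ m ^ r * ((a * m) ^ (1 - r) / (r - 1)) := by
          have := Real.rpow_le_rpow_of_nonpos (by positivity) hN (by linarith : 1 - r ≤ 0)
          gcongr
      _ = 1 / (r - 1) * m * a ^ (1 - r) := by
          rw [Real.mul_rpow ha.le hm.le, Real.rpow_sub hm, Real.rpow_one]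
          field_simp
  rw [← sum_filter_add_sum_filter_not S (· ≤ N)]
  linarith

theorem sum_comp_natAbs_sub_le (T : Finset ℤ) (c : ℤ) {f : ℕ → ℝ} (hf : ∀ k, 0 ≤ f k) :
    ∑ n ∈ T, f (n - c).natAbs ≤ 2 * ∑ k ∈ T.image (fun n => (n - c).natAbs), f k := by
  rw [sum_comp, mul_sum]
  refine sum_le_sum fun k _ => ?_
  rw [nsmul_eq_mul]
  gcongr
  · exact hf k
  have fiber : {n ∈ T | (n - c).natAbs = k} ⊆ {c + k, c - k} := fun n hn => by
    simp only [mem_filter] at hn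
    simp only [mem_insert, mem_singleton]
    omega
  exact_mod_cast (card_le_card fiber).trans card_le_two

theorem sum_max_abs_sub_div_rpow_neg_le {r a m : ℝ} (hr : 1 < r) (hm : 0 < m) (ham : 1 ≤ a * m)
    (T : Finset ℤ) (c : ℤ) :
    ∑ n ∈ T, max a (|(n : ℝ) - c| / m) ^ (-r) ≤ (6 + 2 / (r - 1)) * m * a ^ (1 - r) := by
  have ha : 0 < a := pos_of_mul_pos_left (one_pos.trans_le ham) hm.le
  have abs_eq : ∀ n : ℤ, |(n : ℝ) - c| = ((n - c).natAbs : ℕ) := fun n => by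
    rw [Nat.cast_natAbs, Int.cast_abs, Int.cast_sub]
  simp_rw [abs_eq]
  calc ∑ n ∈ T, max a (((n - c).natAbs : ℕ) / m) ^ (-r)
      ≤ 2 * ∑ k ∈ T.image (fun n => (n - c).natAbs), max a (k / m) ^ (-r) :=
        sum_comp_natAbs_sub_le T c (f := fun k : ℕ => max a (k / m) ^ (-r))
          fun k => Real.rpow_nonneg (ha.le.trans (le_max_left _ _)) _
    _ ≤ 2 * ((3 + 1 / (r - 1)) * m * a ^ (1 - r)) := by
        gcongr
        exact sum_max_div_rpow_neg_le hr hm ham _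
    _ = (6 + 2 / (r - 1)) * m * a ^ (1 - r) := by ring

theorem max_norm_rpow_neg_le_prod {d : ℕ} {a r : ℝ} (ha : 0 < a) (hr : 0 ≤ r) (v : Fin d → ℝ) :
    max a ‖v‖ ^ (-(d * r)) ≤ ∏ i, max a |v i| ^ (-r) := by
  calc max a ‖v‖ ^ (-(d * r)) = ∏ _i : Fin d, max a ‖v‖ ^ (-r) := by
        rw [Fin.prod_const, ← Real.rpow_natCast, ← Real.rpow_mul (ha.le.trans (le_max_left _ _))]
        ring_nf
    _ ≤ ∏ i, max a |v i| ^ (-r) := by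
        refine prod_le_prod (fun _ _ => by positivity) fun i _ => ?_
        refine Real.rpow_le_rpow_of_nonpos (lt_max_of_lt_left ha) ?_ (by linarith)
        exact max_le_max_left a ((Real.norm_eq_abs _).symm.trans_le (norm_le_pi_norm v i))

theorem sum_prod_le_prod_sum_image {ι α R : Type*} [Fintype ι] [DecidableEq ι] [DecidableEq α]
    [CommSemiring R] [PartialOrder R] [IsOrderedRing R] (s : Finset (ι → α)) {g : ι → α → R}
    (hg : ∀ i a, 0 ≤ g i a) :
    ∑ τ ∈ s, ∏ i, g i (τ i) ≤ ∏ i, ∑ a ∈ s.image (· i), g i a := by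
  rw [prod_univ_sum]
  exact sum_le_sum_of_subset_of_nonneg
    (fun τ hτ => Fintype.mem_piFinset.2 fun i => mem_image_of_mem _ hτ)
    fun p _ _ => prod_nonneg fun i _ => hg i (p i)

theorem rpow_neg_mul_sum_max_norm_rpow_neg_le {d : ℕ} {r a m : ℝ} (hr : 1 < r) (hm : 0 < m)
    (ham : 1 ≤ a * m) (s : Finset (Fin d → ℤ)) (c : Fin d → ℤ) :
    m ^ (-(d : ℝ)) * ∑ τ ∈ s,
        max a ‖(fun i => (τ i : ℝ) / m) - (fun i => (c i : ℝ) / m)‖ ^ (-(d * r))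
      ≤ (6 + 2 / (r - 1)) ^ d * a ^ (d * (1 - r)) := by
  have ha : 0 < a := pos_of_mul_pos_left (one_pos.trans_le ham) hm.le
  have coord : ∀ (τ : Fin d → ℤ) i,
      |((fun i => (τ i : ℝ) / m) - (fun i => (c i : ℝ) / m)) i| = |(τ i : ℝ) - c i| / m :=
    fun τ i => by rw [Pi.sub_apply, ← sub_div, abs_div, abs_of_pos hm]
  calc m ^ (-(d : ℝ)) * ∑ τ ∈ s,
        max a ‖(fun i => (τ i : ℝ) / m) - (fun i => (c i : ℝ) / m)‖ ^ (-(d * r))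
      ≤ m ^ (-(d : ℝ)) * ∑ τ ∈ s, ∏ i, max a (|(τ i : ℝ) - c i| / m) ^ (-r) := by
        gcongr with τ
        refine (max_norm_rpow_neg_le_prod ha (by linarith) _).trans_eq ?_
        simp only [coord]
    _ ≤ m ^ (-(d : ℝ)) * ∏ i, ∑ n ∈ s.image (· i), max a (|((n : ℤ) : ℝ) - c i| / m) ^ (-r) := by
        gcongr
        exact sum_prod_le_prod_sum_image s
          (g := fun i (n : ℤ) => max a (|(n : ℝ) - c i| / m) ^ (-r)) fun _ _ => by positivity
    _ ≤ m ^ (-(d : ℝ)) * ∏ _i : Fin d, (6 + 2 / (r - 1)) * m * a ^ (1 - r) := by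
        gcongr with i
        exact sum_max_abs_sub_div_rpow_neg_le hr hm ham _ _
    _ = (6 + 2 / (r - 1)) ^ d * a ^ (d * (1 - r)) := by
        rw [Fin.prod_const, mul_pow, mul_pow, ← Real.rpow_natCast (a ^ (1 - r)),
          ← Real.rpow_mul ha.le, Real.rpow_neg hm.le, Real.rpow_natCast, mul_comm (1 - r)]
        field_simp

theorem stmt_17_general (d : ℕ) (q : ℝ)
    (hqd : 1 ≤ (d : ℝ) * q / 2 - d) :
    ∃ C : ℝ, 0 < C ∧
      ∀ (m M : ℕ) (V : Finset (Fin d → ℤ)) (Vl : Fin M → Finset (Fin d → ℤ))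
        (x : Fin M → (Fin d → ℤ)) (h : (Fin d → ℤ) → ℝ),
        1 ≤ m →
        (∀ τ ∈ V, (1 : ℝ) / m ≤ h τ) →
        (∀ ℓ, x ℓ ∈ V) →
        V = Finset.univ.biUnion Vl →
        (Pairwise fun ℓ ℓ' => Disjoint (Vl ℓ) (Vl ℓ')) →
        (∀ ℓ, ∀ τ ∈ Vl ℓ,
          max (h (x ℓ)) ‖(fun i => (τ i : ℝ) / m) - (fun i => (x ℓ i : ℝ) / m)‖
            ≤ h τ) →
        (m : ℝ) ^ (-(d : ℝ)) * ∑ τ ∈ V, h τ ^ (-(d : ℝ) * q / 2)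
          ≤ C * ∑ ℓ, h (x ℓ) ^ ((d : ℝ) - d * q / 2) := by
  have hr : 1 < q / 2 := by
    by_contra! hq
    nlinarith [mul_nonpos_of_nonneg_of_nonpos d.cast_nonneg (sub_nonpos.2 hq)]
  have hK : 0 < 6 + 2 / (q / 2 - 1) := by
    have := div_pos two_pos (sub_pos.2 hr)
    linarith
  refine ⟨(6 + 2 / (q / 2 - 1)) ^ d, pow_pos hK d, ?_⟩
  intro m M V Vl x h hm hV hx hVU hdisj hmax
  have hm' : (0 : ℝ) < m := by exact_mod_cast hm
  rw [hVU, sum_biUnion fun ℓ _ ℓ' _ hne => hdisj hne, mul_sum, mul_sum]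
  refine sum_le_sum fun ℓ _ => ?_
  have ha : 1 ≤ h (x ℓ) * m := (div_le_iff₀ hm').1 (hV _ (hx ℓ))
  have ha' : 0 < h (x ℓ) := pos_of_mul_pos_left (one_pos.trans_le ha) hm'.le
  calc (m : ℝ) ^ (-(d : ℝ)) * ∑ τ ∈ Vl ℓ, h τ ^ (-(d : ℝ) * q / 2)
      ≤ (m : ℝ) ^ (-(d : ℝ)) * ∑ τ ∈ Vl ℓ,
          max (h (x ℓ)) ‖(fun i => (τ i : ℝ) / m) - (fun i => (x ℓ i : ℝ) / m)‖ ^ (-(d * (q / 2))) := by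
        gcongr with τ hτ
        rw [show -(d : ℝ) * q / 2 = -(d * (q / 2)) by ring]
        exact Real.rpow_le_rpow_of_nonpos (lt_max_of_lt_left ha') (hmax ℓ τ hτ)
          (by nlinarith [d.cast_nonneg (α := ℝ)])
    _ ≤ (6 + 2 / (q / 2 - 1)) ^ d * h (x ℓ) ^ ((d : ℝ) - d * q / 2) := by
        rw [show (d : ℝ) - d * q / 2 = d * (1 - q / 2) by ring]
        exact rpow_neg_mul_sum_max_norm_rpow_neg_le hr hm' ha _ _

/-- Key summation step: if `V ⊆ m⁻¹ℤ^d` is partitioned into groups `V_ℓ` with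
representatives `x_ℓ` such that `h(x) ≥ max(h(x_ℓ), ‖x - x_ℓ‖_∞)` on `V_ℓ`,
`h ≥ m⁻¹` and `dq/2 - d ≥ 1`, then
`m^{-d} Σ_{x∈V} h(x)^{-dq/2} ≤ C(d,q) Σ_ℓ h(x_ℓ)^{d-dq/2}`. -/
theorem stmt_17 (d : ℕ) (q : ℝ) (hd : 1 ≤ d) (hq : 2 ≤ q)
    (hqd : 1 ≤ (d : ℝ) * q / 2 - d) :
    ∃ C : ℝ, 0 < C ∧
      ∀ (m M : ℕ) (V : Finset (Fin d → ℤ)) (Vl : Fin M → Finset (Fin d → ℤ))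
        (x : Fin M → (Fin d → ℤ)) (h : (Fin d → ℤ) → ℝ),
        1 ≤ m →
        (∀ τ ∈ V, (1 : ℝ) / m ≤ h τ) →
        (∀ ℓ, x ℓ ∈ V) →
        V = Finset.univ.biUnion Vl →
        (Pairwise fun ℓ ℓ' => Disjoint (Vl ℓ) (Vl ℓ')) →
        (∀ ℓ, ∀ τ ∈ Vl ℓ,
          max (h (x ℓ)) ‖(fun i => (τ i : ℝ) / m) - (fun i => (x ℓ i : ℝ) / m)‖
            ≤ h τ) →
        (m : ℝ) ^ (-(d : ℝ)) * ∑ τ ∈ V, h τ ^ (-(d : ℝ) * q / 2)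
          ≤ C * ∑ ℓ, h (x ℓ) ^ ((d : ℝ) - d * q / 2) :=
  stmt_17_general d q hqd
end
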